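/- arXiv:2409.03365 — 2 statements merged into one kernel-verified Lean document; each statement's English description precedes it below -/
import Mathlib

section
/- (Theorem 1, lower bound, continuous allocations.) Assume the continuous MPSP setting. Suppose (C*, n*) is an equal-finish point. Then every feasible continuous allocation with makespan C satisfies C ≥ C*. -/
/-!
Averaging a feasible allocation over `[0, C]` gives, by Jensen's inequality, a constant allocation
`n` with `∑ n ≤ N = ∑ n*` that still completes every workload within `C`. Some project then has
`n m ≤ n* m`, and a concave function bounded below on `[0, ∞)` is monotone, so
`L m ≤ f m (n m) * C ≤ f m (n* m) * C`, while `L m = f m (n* m) * C*` with `f m (n* m) > 0`.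
-/

open MeasureTheory

/-- A feasible continuous allocation for the continuous MPSP setting:
`a m` is the (time-varying) device allocation of project `m` on `[0, C]`;
allocations are nonnegative, respect the capacity `N` at every time,
are integrable together with the resulting speeds, and complete
the workload `L m` of every project within the makespan `C`. -/
def FeasibleAlloc {M : Type*} [Fintype M] (L : M → ℝ) (f : M → ℝ → ℝ) (N : ℝ)
    (a : M → ℝ → ℝ) (C : ℝ) : Prop :=
  0 < C ∧
  (∀ m, ∀ t ∈ Set.Icc (0 : ℝ) C, 0 ≤ a m t) ∧
  (∀ t ∈ Set.Icc (0 : ℝ) C, ∑ m, a m t ≤ N) ∧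
  (∀ m, IntegrableOn (a m) (Set.Icc 0 C)) ∧
  (∀ m, IntegrableOn (fun t => f m (a m t)) (Set.Icc 0 C)) ∧
  (∀ m, L m ≤ ∫ t in Set.Icc (0 : ℝ) C, f m (a m t))

open Set

theorem ConcaveOn.monotoneOn_of_bddBelow {g : ℝ → ℝ} {a : ℝ} (hg : ConcaveOn ℝ (Ici a) g)
    (hbdd : BddBelow (g '' Ici a)) : MonotoneOn g (Ici a) := by
  obtain ⟨b, hb⟩ := hbdd
  intro x hx y hy hxy
  rcases hxy.eq_or_lt with rfl | hxy
  · rfl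
  by_contra! hdrop
  -- A secant of negative slope `-d` forces `g` below `b` to the right of `y`.
  set d := (g x - g y) / (y - x) with hd
  have hd_pos : 0 < d := div_pos (sub_pos.2 hdrop) (sub_pos.2 hxy)
  have hgy : b ≤ g y := hb (mem_image_of_mem g hy)
  set z := y + (g y - b + 1) / d with hz
  have hyz : y < z := lt_add_of_pos_right y (div_pos (by linarith) hd_pos)
  have hzs : z ∈ Ici a := le_trans hy hyz.le
  have hslope := hg.slope_anti_adjacent hx hzs hxy hyz
  have hslope_eq : (g y - g x) / (y - x) = -d := by rw [hd, ← neg_div, neg_sub]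
  rw [hslope_eq, div_le_iff₀ (sub_pos.2 hyz), hz, add_sub_cancel_left, neg_mul,
    mul_div_cancel₀ _ hd_pos.ne'] at hslope
  have hgz : b ≤ g z := hb (mem_image_of_mem g hzs)
  linarith

theorem FeasibleAlloc.exists_const_alloc {M : Type*} [Fintype M] {L : M → ℝ} {f : M → ℝ → ℝ}
    {N : ℝ} {a : M → ℝ → ℝ} {C : ℝ} (hconc : ∀ m, ConcaveOn ℝ (Ici 0) (f m))
    (hcont : ∀ m, ContinuousOn (f m) (Ici 0)) (hfeas : FeasibleAlloc L f N a C) :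
    ∃ n : M → ℝ, (∀ m, 0 ≤ n m) ∧ ∑ m, n m ≤ N ∧ ∀ m, L m ≤ f m (n m) * C := by
  obtain ⟨hC, hpos, hcap, hint_a, hint_f, hwork⟩ := hfeas
  have hvol : volume.real (Icc (0 : ℝ) C) = C := by
    rw [Real.volume_real_Icc_of_le hC.le, sub_zero]
  have hvol_ne_zero : volume (Icc (0 : ℝ) C) ≠ 0 := by simp [hC]
  have hvol_ne_top : volume (Icc (0 : ℝ) C) ≠ ⊤ := measure_Icc_lt_top.ne
  have hmem : ∀ m, ∀ᵐ t ∂volume.restrict (Icc 0 C), a m t ∈ Ici 0 := fun m =>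
    ae_restrict_of_forall_mem measurableSet_Icc (hpos m)
  refine ⟨fun m => ⨍ t in Icc 0 C, a m t, fun m => ?_, ?_, fun m => ?_⟩
  · exact (convex_Ici 0).set_average_mem isClosed_Ici hvol_ne_zero hvol_ne_top (hmem m) (hint_a m)
  · have hint : ∫ t in Icc 0 C, ∑ m, a m t ≤ ∫ _ in Icc 0 C, N :=
      setIntegral_mono_on (integrable_finsetSum _ fun m _ => hint_a m)
        (integrableOn_const hvol_ne_top) measurableSet_Icc hcap
    simp only [setAverage_eq, hvol, smul_eq_mul, ← Finset.mul_sum]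
    rw [← integral_finsetSum _ fun m _ => hint_a m, inv_mul_le_iff₀ hC]
    simpa [setIntegral_const, hvol, mul_comm] using hint
  · have hjensen := (hconc m).le_map_set_average (hcont m) isClosed_Ici hvol_ne_zero hvol_ne_top
      (hmem m) (hint_a m) (hint_f m)
    rw [setAverage_eq, hvol, smul_eq_mul, inv_mul_le_iff₀ hC] at hjensen
    linarith [hwork m]

theorem mpsp_lower_bound_general {M : Type*} [Fintype M] [Nonempty M]
    (L : M → ℝ) (hL : ∀ m, 0 < L m)
    (f : M → ℝ → ℝ)
    (hconc : ∀ m, ConcaveOn ℝ (Set.Ici 0) (f m))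
    (hcont : ∀ m, ContinuousOn (f m) (Set.Ici 0))
    (hnonneg : ∀ m, ∀ x : ℝ, 0 ≤ x → 0 ≤ f m x)
    (N : ℝ)
    (Cstar : ℝ) (nstar : M → ℝ)
    (hfinish : ∀ m, f m (nstar m) * Cstar = L m)
    (hsum : ∑ m, nstar m = N)
    (a : M → ℝ → ℝ) (C : ℝ)
    (hfeas : FeasibleAlloc L f N a C) :
    Cstar ≤ C := by
  obtain ⟨n, hn_nonneg, hn_sum, hn_work⟩ := hfeas.exists_const_alloc hconc hcont
  obtain ⟨m, -, hm⟩ := Finset.exists_le_of_sum_le Finset.univ_nonempty (hn_sum.trans hsum.ge)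
  have hmono : f m (n m) ≤ f m (nstar m) :=
    (hconc m).monotoneOn_of_bddBelow ⟨0, forall_mem_image.2 (hnonneg m)⟩ (hn_nonneg m)
      ((hn_nonneg m).trans hm) hm
  have hspeed_pos : 0 < f m (nstar m) := by
    refine (hnonneg m _ ((hn_nonneg m).trans hm)).lt_of_ne' fun hzero => ?_
    simpa [hzero] using (hL m).trans_eq (hfinish m).symm
  have hwork : f m (nstar m) * Cstar ≤ f m (nstar m) * C := by
    rw [hfinish m]
    exact (hn_work m).trans (mul_le_mul_of_nonneg_right hmono hfeas.1.le)
  exact le_of_mul_le_mul_left hwork hspeed_pos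

/-- Theorem 1 (lower bound, continuous allocations): if `(Cstar, nstar)` is an
equal-finish point, then every feasible continuous allocation with makespan `C`
satisfies `C ≥ Cstar`. -/
theorem mpsp_lower_bound {M : Type*} [Fintype M] [Nonempty M]
    (L : M → ℝ) (hL : ∀ m, 0 < L m)
    (f : M → ℝ → ℝ)
    (hconc : ∀ m, ConcaveOn ℝ (Set.Ici 0) (f m))
    (hcont : ∀ m, ContinuousOn (f m) (Set.Ici 0))
    (hnonneg : ∀ m, ∀ x : ℝ, 0 ≤ x → 0 ≤ f m x)
    (hzero : ∀ m, f m 0 = 0)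
    (N : ℝ) (hN : 0 < N)
    (Cstar : ℝ) (nstar : M → ℝ) (hCstar : 0 < Cstar)
    (hnstar_nonneg : ∀ m, 0 ≤ nstar m)
    (hfinish : ∀ m, f m (nstar m) * Cstar = L m)
    (hsum : ∑ m, nstar m = N)
    (a : M → ℝ → ℝ) (C : ℝ)
    (hfeas : FeasibleAlloc L f N a C) :
    Cstar ≤ C :=
  mpsp_lower_bound_general L hL f hconc hcont hnonneg N Cstar nstar hfinish hsum a C hfeas
end

section
/- (Theorem 1, ASL-tuple form.) Assume the continuous MPSP setting, and additionally that f_m(x) > 0 for every x > 0 and every m ∈ M. Let (C*, n*) be an equal-finish point (so necessarily n*_m > 0 for all m). Then the single-tuple plan assigning to each project m the one tuple (n*_m, 0, L_m) is a feasible ASL-tuple plan with makespan C*, and every feasible ASL-tuple plan has makespan at least C*. In particular, the optimal (relaxed) ASL-tuple plan executes every project with the constant allocation n*_m from time 0 until the common completion time C*. -/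
/-!
If a plan finishes by time `B`, the tuples of each project occupy disjoint subintervals of
`(0, B)`, so their durations `tₚ` add up to at most `B`. Jensen's inequality, with the idle time
counted as running on `0` devices, turns `Lₘ = ∑ tₚ fₘ(nₚ)` into `Lₘ ≤ B fₘ(Aₘ / B)`, where
`Aₘ = ∑ tₚ nₚ` is the device-time of project `m`. Integrating the capacity constraint over
`(0, B)` gives `∑ Aₘ ≤ N B = ∑ n*ₘ B`, so some project has `Aₘ / B ≤ n*ₘ`; a nonnegative
concave function is nondecreasing, hence `Lₘ ≤ B fₘ(n*ₘ) = B Lₘ / C*`, i.e. `C* ≤ B`.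
-/
open scoped Classical

/-- The execution interval of an ASL-tuple `p = (n, s, l)` of a project with
speed function `fm`: the open interval `(s, s + l / fm n)`, where
`l / fm n` is the execution time of the tuple. -/
def tupleInterval (fm : ℝ → ℝ) (p : ℝ × ℝ × ℝ) : Set ℝ :=
  Set.Ioo p.2.1 (p.2.1 + p.2.2 / fm p.1)

/-- A feasible ASL-tuple plan: each project `m` gets a finite set `P m` of
triples `(n, s, l)` with `n > 0`, `s ≥ 0`, `l > 0`; at every time the total
allocation of active tuples is at most `N` (capacity); intervals of distinct
tuples of the same project are disjoint (no self-overlap); and the layer counts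
of the tuples of each project sum to its workload (completeness). -/
def FeasiblePlan {M : Type*} [Fintype M] (L : M → ℝ) (f : M → ℝ → ℝ) (N : ℝ)
    (P : M → Finset (ℝ × ℝ × ℝ)) : Prop :=
  (∀ m, ∀ p ∈ P m, 0 < p.1 ∧ 0 ≤ p.2.1 ∧ 0 < p.2.2) ∧
  (∀ t : ℝ, ∑ m, ∑ p ∈ (P m).filter (fun p => t ∈ tupleInterval (f m) p), p.1 ≤ N) ∧
  (∀ m, ∀ p₁ ∈ P m, ∀ p₂ ∈ P m, p₁ ≠ p₂ →
    Disjoint (tupleInterval (f m) p₁) (tupleInterval (f m) p₂)) ∧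
  (∀ m, ∑ p ∈ P m, p.2.2 = L m)

open MeasureTheory in
theorem sum_mul_length_le_of_load_le {ι : Type*} {S : Finset ι} {a b c : ι → ℝ} {lo hi K : ℝ}
    (hlohi : lo ≤ hi) (hab : ∀ i ∈ S, a i ≤ b i) (hlo : ∀ i ∈ S, lo ≤ a i)
    (hhi : ∀ i ∈ S, b i ≤ hi) (hload : ∀ t, ∑ i ∈ S with t ∈ Set.Ioo (a i) (b i), c i ≤ K) :
    ∑ i ∈ S, c i * (b i - a i) ≤ K * (hi - lo) := by
  set g : ℝ → ι → ℝ := fun t i => (Set.Ioo (a i) (b i)).indicator (fun _ => c i) t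
  have hint : ∀ i ∈ S, IntegrableOn (fun t => g t i) (Set.Ioo lo hi) := fun i _ =>
    (integrableOn_const measure_Ioo_lt_top.ne).indicator measurableSet_Ioo
  have hpiece : ∀ i ∈ S, ∫ t in Set.Ioo lo hi, g t i = c i * (b i - a i) := fun i hiS => by
    rw [setIntegral_indicator measurableSet_Ioo,
      Set.inter_eq_right.2 (Set.Ioo_subset_Ioo (hlo i hiS) (hhi i hiS)), setIntegral_const,
      Real.volume_real_Ioo_of_le (hab i hiS), smul_eq_mul, mul_comm]
  calc ∑ i ∈ S, c i * (b i - a i) = ∫ t in Set.Ioo lo hi, ∑ i ∈ S, g t i := by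
        rw [integral_finsetSum _ hint]; exact (Finset.sum_congr rfl hpiece).symm
    _ ≤ ∫ _ in Set.Ioo lo hi, K := by
        refine setIntegral_mono_on (integrable_finsetSum _ hint) (integrableOn_const (by simp))
          measurableSet_Ioo fun t _ => ?_
        simpa only [g, Finset.sum_indicator_eq_sum_filter] using hload t
    _ = K * (hi - lo) := by
        rw [setIntegral_const, Real.volume_real_Ioo_of_le hlohi, smul_eq_mul, mul_comm]

theorem sum_length_le_of_pairwiseDisjoint {ι : Type*} {S : Finset ι} {a b : ι → ℝ} {lo hi : ℝ}
    (hlohi : lo ≤ hi) (hab : ∀ i ∈ S, a i ≤ b i) (hlo : ∀ i ∈ S, lo ≤ a i)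
    (hhi : ∀ i ∈ S, b i ≤ hi) (hdisj : (S : Set ι).PairwiseDisjoint fun i => Set.Ioo (a i) (b i)) :
    ∑ i ∈ S, (b i - a i) ≤ hi - lo := by
  have hload : ∀ t, ∑ i ∈ S with t ∈ Set.Ioo (a i) (b i), (1 : ℝ) ≤ 1 := fun t => by
    rw [Finset.sum_const, nsmul_one, Nat.cast_le_one, Finset.card_le_one]
    intro i hi j hj
    rw [Finset.mem_filter] at hi hj
    by_contra hij
    exact Set.disjoint_left.1 (hdisj hi.1 hj.1 hij) hi.2 hj.2
  simpa using sum_mul_length_le_of_load_le hlohi hab hlo hhi hload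

theorem ConcaveOn.mul_le_map_mul {f : ℝ → ℝ} (hf : ConcaveOn ℝ (Set.Ici 0) f) (h0 : 0 ≤ f 0)
    {t x : ℝ} (ht0 : 0 ≤ t) (ht1 : t ≤ 1) (hx : 0 ≤ x) : t * f x ≤ f (t * x) := by
  have := hf.2 (Set.mem_Ici.2 hx) (Set.mem_Ici.2 le_rfl) ht0 (sub_nonneg.2 ht1)
    (add_sub_cancel t 1)
  simp only [smul_eq_mul, mul_zero, add_zero] at this
  nlinarith [mul_nonneg (sub_nonneg.2 ht1) h0]

theorem ConcaveOn.monotoneOn_of_nonneg {f : ℝ → ℝ} {a : ℝ} (hf : ConcaveOn ℝ (Set.Ici a) f)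
    (hnn : ∀ x ∈ Set.Ici a, 0 ≤ f x) : MonotoneOn f (Set.Ici a) := by
  intro x hx y hy hxy
  rcases hxy.eq_or_lt with rfl | hxy
  · rfl
  by_contra! hdrop
  -- a negative slope on `[x, y]` bounds every later slope, forcing `f` below zero eventually
  set s := (f y - f x) / (y - x) with hs
  have hs_neg : s < 0 := div_neg_of_neg_of_pos (by linarith) (by linarith)
  set z := y + f y / -s + 1 with hz
  have hyz : y < z := by have := div_nonneg (hnn y hy) (neg_pos.2 hs_neg).le; linarith
  have hzmem : z ∈ Set.Ici a := le_trans hy hyz.le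
  have hslope := hf.slope_anti_adjacent hx hzmem hxy hyz
  rw [← hs, div_le_iff₀ (by linarith)] at hslope
  have : f y / -s * -s = f y := div_mul_cancel₀ _ (by linarith)
  nlinarith [hnn z hzmem]

theorem ConcaveOn.sum_mul_le_mul_map_div {ι : Type*} {f : ℝ → ℝ}
    (hf : ConcaveOn ℝ (Set.Ici 0) f) (h0 : 0 ≤ f 0) {s : Finset ι} {w x : ι → ℝ} {B : ℝ}
    (hw : ∀ i ∈ s, 0 ≤ w i) (hx : ∀ i ∈ s, 0 ≤ x i) (hB : 0 < B) (hwB : ∑ i ∈ s, w i ≤ B) :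
    ∑ i ∈ s, w i * f (x i) ≤ B * f ((∑ i ∈ s, w i * x i) / B) := by
  rcases (Finset.sum_nonneg hw).eq_or_lt with hW | hW
  · have hw0 := (Finset.sum_eq_zero_iff_of_nonneg hw).1 hW.symm
    rw [Finset.sum_eq_zero fun i hi => by rw [hw0 i hi, zero_mul],
      Finset.sum_eq_zero fun i hi => by rw [hw0 i hi, zero_mul], zero_div]
    exact mul_nonneg hB.le h0
  -- Jensen for the weights `w`, then the idle time `B - W` counts as running at the point `0`
  have hjensen := hf.le_map_centerMass hw hW fun i hi => Set.mem_Ici.2 (hx i hi)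
  simp only [Finset.centerMass, smul_eq_mul, Function.comp_apply] at hjensen
  set W := ∑ i ∈ s, w i
  set A := ∑ i ∈ s, w i * x i
  have hscale := hf.mul_le_map_mul h0 (div_nonneg hW.le hB.le) ((div_le_one hB).2 hwB)
    (mul_nonneg (inv_nonneg.2 hW.le) (Finset.sum_nonneg fun i hi => mul_nonneg (hw i hi) (hx i hi)))
  calc ∑ i ∈ s, w i * f (x i) = W * (W⁻¹ * ∑ i ∈ s, w i * f (x i)) :=
        (mul_inv_cancel_left₀ hW.ne' _).symm
    _ ≤ W * f (W⁻¹ * A) := by gcongr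
    _ = B * (W / B * f (W⁻¹ * A)) := by field_simp
    _ ≤ B * f (W / B * (W⁻¹ * A)) := by gcongr
    _ = B * f (A / B) := by congr 2; field_simp

noncomputable def deviceTime {M : Type*} (f : M → ℝ → ℝ) (P : M → Finset (ℝ × ℝ × ℝ)) (m : M) :
    ℝ :=
  ∑ p ∈ P m, p.2.2 / f m p.1 * p.1

section Plans

variable {M : Type*} [Fintype M] {L : M → ℝ} {f : M → ℝ → ℝ} {N B : ℝ}
  {P : M → Finset (ℝ × ℝ × ℝ)}

theorem feasiblePlan_singleton {n : M → ℝ} (hn : ∀ m, 0 < n m) (hL : ∀ m, 0 < L m)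
    (hsum : ∑ m, n m ≤ N) : FeasiblePlan L f N fun m => {(n m, 0, L m)} := by
  refine ⟨by simpa using fun m => ⟨hn m, hL m⟩, fun t => ?_, by simp,
    fun m => Finset.sum_singleton _ _⟩
  refine le_trans (Finset.sum_le_sum fun m _ => ?_) hsum
  rw [Finset.filter_singleton]
  split_ifs <;> simp [(hn m).le]

namespace FeasiblePlan

theorem duration_nonneg (hP : FeasiblePlan L f N P) {m : M} (hf : ∀ x, 0 < x → 0 ≤ f m x)
    {p : ℝ × ℝ × ℝ} (hp : p ∈ P m) : 0 ≤ p.2.2 / f m p.1 :=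
  div_nonneg (hP.1 m p hp).2.2.le (hf _ (hP.1 m p hp).1)

theorem deviceTime_nonneg (hP : FeasiblePlan L f N P) {m : M} (hf : ∀ x, 0 < x → 0 ≤ f m x) :
    0 ≤ deviceTime f P m :=
  Finset.sum_nonneg fun _ hp => mul_nonneg (hP.duration_nonneg hf hp) (hP.1 m _ hp).1.le

theorem sum_duration_le (hP : FeasiblePlan L f N P) {m : M} (hf : ∀ x, 0 < x → 0 ≤ f m x)
    (hB0 : 0 ≤ B) (hB : ∀ p ∈ P m, p.2.1 + p.2.2 / f m p.1 ≤ B) :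
    ∑ p ∈ P m, p.2.2 / f m p.1 ≤ B := by
  simpa using sum_length_le_of_pairwiseDisjoint (S := P m) (a := fun p => p.2.1)
    (b := fun p => p.2.1 + p.2.2 / f m p.1) hB0
    (fun p hp => le_add_of_nonneg_right (hP.duration_nonneg hf hp))
    (fun p hp => (hP.1 m p hp).2.1) hB (hP.2.2.1 m)

theorem sum_deviceTime_le (hP : FeasiblePlan L f N P) (hf : ∀ m, ∀ x, 0 < x → 0 ≤ f m x)
    (hB0 : 0 ≤ B) (hB : ∀ m, ∀ p ∈ P m, p.2.1 + p.2.2 / f m p.1 ≤ B) :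
    ∑ m, deviceTime f P m ≤ N * B := by
  have := sum_mul_length_le_of_load_le (S := Finset.univ.sigma P) (a := fun i => i.2.2.1)
    (b := fun i => i.2.2.1 + i.2.2.2 / f i.1 i.2.1) (c := fun i => i.2.1) (K := N) hB0
    (fun i hi => le_add_of_nonneg_right (hP.duration_nonneg (hf i.1) (Finset.mem_sigma.1 hi).2))
    (fun i hi => (hP.1 _ _ (Finset.mem_sigma.1 hi).2).2.1)
    (fun i hi => hB _ _ (Finset.mem_sigma.1 hi).2)
    (fun t => by simpa [Finset.filter_sigma, Finset.sum_sigma, tupleInterval] using hP.2.1 t)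
  simpa [deviceTime, Finset.sum_sigma, mul_comm] using this

theorem pos_of_makespan_le (hP : FeasiblePlan L f N P) {m : M} (hLm : L m ≠ 0)
    (hf : ∀ x, 0 < x → 0 < f m x) (hB : ∀ p ∈ P m, p.2.1 + p.2.2 / f m p.1 ≤ B) : 0 < B := by
  obtain ⟨p, hp⟩ := Finset.nonempty_of_sum_ne_zero (hP.2.2.2 m ▸ hLm)
  obtain ⟨hn, hs, hl⟩ := hP.1 m p hp
  exact (add_pos_of_nonneg_of_pos hs (div_pos hl (hf _ hn))).trans_le (hB p hp)

theorem workload_le (hP : FeasiblePlan L f N P) {m : M} (hconc : ConcaveOn ℝ (Set.Ici 0) (f m))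
    (h0 : 0 ≤ f m 0) (hf : ∀ x, 0 < x → 0 < f m x) (hB0 : 0 < B)
    (hB : ∀ p ∈ P m, p.2.1 + p.2.2 / f m p.1 ≤ B) :
    L m ≤ B * f m (deviceTime f P m / B) := by
  have hf' : ∀ x, 0 < x → 0 ≤ f m x := fun x hx => (hf x hx).le
  calc L m = ∑ p ∈ P m, p.2.2 / f m p.1 * f m p.1 := by
        rw [← hP.2.2.2 m]
        exact Finset.sum_congr rfl fun p hp => (div_mul_cancel₀ _ (hf _ (hP.1 m p hp).1).ne').symm
    _ ≤ B * f m (deviceTime f P m / B) :=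
        hconc.sum_mul_le_mul_map_div h0 (fun _ hp => hP.duration_nonneg hf' hp)
          (fun p hp => (hP.1 m p hp).1.le) hB0 (hP.sum_duration_le hf' hB0.le hB)

end FeasiblePlan

end Plans

theorem mpsp_asl_optimality_general {M : Type*} [Fintype M] [Nonempty M]
    (L : M → ℝ) (hL : ∀ m, 0 < L m)
    (f : M → ℝ → ℝ)
    (hconc : ∀ m, ConcaveOn ℝ (Set.Ici 0) (f m))
    (hnonneg : ∀ m, ∀ x : ℝ, 0 ≤ x → 0 ≤ f m x)
    (hzero : ∀ m, f m 0 = 0)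
    (hpos : ∀ m, ∀ x : ℝ, 0 < x → 0 < f m x)
    (N : ℝ)
    (Cstar : ℝ) (nstar : M → ℝ) (hCstar : 0 < Cstar)
    (hnstar_nonneg : ∀ m, 0 ≤ nstar m)
    (hfinish : ∀ m, f m (nstar m) * Cstar = L m)
    (hsum : ∑ m, nstar m = N) :
    FeasiblePlan L f N (fun m => {(nstar m, 0, L m)}) ∧
    (∀ m, (0 : ℝ) + L m / f m (nstar m) = Cstar) ∧
    (∀ P : M → Finset (ℝ × ℝ × ℝ), FeasiblePlan L f N P →
      ∀ B : ℝ, (∀ m, ∀ p ∈ P m, p.2.1 + p.2.2 / f m p.1 ≤ B) → Cstar ≤ B) := by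
  have hnstar_pos : ∀ m, 0 < nstar m := fun m => (hnstar_nonneg m).lt_of_ne fun h => by
    simpa [← h, hzero] using (hfinish m).trans_ne (hL m).ne'
  refine ⟨feasiblePlan_singleton hnstar_pos hL hsum.le, fun m => ?_, fun P hP B hB => ?_⟩
  · rw [zero_add, ← hfinish m, mul_div_cancel_left₀ _ (hpos m _ (hnstar_pos m)).ne']
  obtain ⟨m₀⟩ := ‹Nonempty M›
  have hB0 : 0 < B := hP.pos_of_makespan_le (hL m₀).ne' (hpos m₀) (hB m₀)
  -- some project receives at most its equal-finish share `nstar m * B` of device-time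
  obtain ⟨m, -, hm⟩ : ∃ m ∈ Finset.univ, deviceTime f P m / B ≤ nstar m := by
    refine Finset.exists_le_of_sum_le Finset.univ_nonempty ?_
    rw [← Finset.sum_div, hsum, div_le_iff₀ hB0]
    exact hP.sum_deviceTime_le (fun m x hx => hnonneg m x hx.le) hB0.le hB
  have hspeed : L m ≤ B * f m (nstar m) :=
    (hP.workload_le (hconc m) (hzero m).ge (hpos m) hB0 (hB m)).trans <|
      mul_le_mul_of_nonneg_left ((hconc m).monotoneOn_of_nonneg (hnonneg m)
        (div_nonneg (hP.deviceTime_nonneg fun x hx => hnonneg m x hx.le) hB0.le)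
        (hnstar_nonneg m) hm) hB0.le
  refine le_of_mul_le_mul_left ?_ (hL m)
  calc L m * Cstar ≤ B * f m (nstar m) * Cstar := by gcongr
    _ = L m * B := by rw [mul_assoc, hfinish, mul_comm]

/-- Theorem 1 (ASL-tuple form): for an equal-finish point `(Cstar, nstar)` (with
positive speeds at positive allocations), the single-tuple plan giving every
project `m` the one tuple `(nstar m, 0, L m)` is feasible, every one of its
tuples finishes exactly at time `Cstar` (so its makespan is `Cstar`), and every
feasible ASL-tuple plan has makespan at least `Cstar`. -/
theorem mpsp_asl_optimality {M : Type*} [Fintype M] [Nonempty M]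
    (L : M → ℝ) (hL : ∀ m, 0 < L m)
    (f : M → ℝ → ℝ)
    (hconc : ∀ m, ConcaveOn ℝ (Set.Ici 0) (f m))
    (hcont : ∀ m, ContinuousOn (f m) (Set.Ici 0))
    (hnonneg : ∀ m, ∀ x : ℝ, 0 ≤ x → 0 ≤ f m x)
    (hzero : ∀ m, f m 0 = 0)
    (hpos : ∀ m, ∀ x : ℝ, 0 < x → 0 < f m x)
    (N : ℝ) (hN : 0 < N)
    (Cstar : ℝ) (nstar : M → ℝ) (hCstar : 0 < Cstar)
    (hnstar_nonneg : ∀ m, 0 ≤ nstar m)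
    (hfinish : ∀ m, f m (nstar m) * Cstar = L m)
    (hsum : ∑ m, nstar m = N) :
    FeasiblePlan L f N (fun m => {(nstar m, 0, L m)}) ∧
    (∀ m, (0 : ℝ) + L m / f m (nstar m) = Cstar) ∧
    (∀ P : M → Finset (ℝ × ℝ × ℝ), FeasiblePlan L f N P →
      ∀ B : ℝ, (∀ m, ∀ p ∈ P m, p.2.1 + p.2.2 / f m p.1 ≤ B) → Cstar ≤ B) :=
  mpsp_asl_optimality_general L hL f hconc hnonneg hzero hpos N Cstar nstar hCstar hnstar_nonneg
    hfinish hsum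
end
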